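/- (Lemma 4(ii)) Let f,g,h,l be a permutation of 1,2,3,4 and let ρ be a pure density matrix on (ℂ^d)^{⊗4} that is separable under at least one bipartition of {1,2,3,4} (i.e. ρ = ρ_A ⊗ ρ_B, up to permutation of tensor factors, for some bipartition A|B into two nonempty complementary subsets) but entangled (not separable) under the bipartition fg|hl. Then for every k = 1,…,d²−1, ‖T_{fg|hl}‖_k ≤ 4k(d²−1)/d². -/

import Mathlib

open Matrix ComplexOrder

/-- The singular values of a real matrix `M`: square roots of eigenvalues of `Mᴴ * M`. -/
noncomputable def singVals {α β : Type*} [Fintype α] [Fintype β] [DecidableEq β]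
    (M : Matrix α β ℝ) : β → ℝ :=
  fun i => Real.sqrt ((Matrix.isHermitian_conjTranspose_mul_self M).eigenvalues i)

/-- The Ky Fan `k`-norm of a real matrix: the sum of its `k` largest singular values
(realized as the largest sum of singular values over index sets of size at most `k`). -/
noncomputable def kyFan {α β : Type*} [Fintype α] [Fintype β] [DecidableEq β]
    (k : ℕ) (M : Matrix α β ℝ) : ℝ :=
  (Finset.univ.powerset.filter (fun s : Finset β => s.card ≤ k)).sup'
    ⟨∅, by simp⟩ (fun s => ∑ i ∈ s, singVals M i)

/-- Separability of an `n`-partite state (indexed by `Fin n → Fin d`) under the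
bipartition `A | Aᶜ`: `ρ` is, up to the permutation of tensor factors, the tensor
product of a density matrix on the factors in `A` and one on the factors not in `A`. -/
def SepUnder {n d : ℕ} (ρ : Matrix (Fin n → Fin d) (Fin n → Fin d) ℂ)
    (A : Finset (Fin n)) : Prop :=
  ∃ (ρA : Matrix ({j // j ∈ A} → Fin d) ({j // j ∈ A} → Fin d) ℂ)
    (ρB : Matrix ({j // j ∉ A} → Fin d) ({j // j ∉ A} → Fin d) ℂ),
    ρA.PosSemidef ∧ ρA.trace = 1 ∧ ρB.PosSemidef ∧ ρB.trace = 1 ∧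
    ∀ v w, ρ v w = ρA (fun j => v j.1) (fun j => w j.1) * ρB (fun j => v j.1) (fun j => w j.1)

/-- The full `n`-body correlation tensor entry `t_{a 0, …, a (n-1)}` of `ρ`,
i.e. `tr (ρ · (λ_{a 0} ⊗ ⋯ ⊗ λ_{a (n-1)}))`. -/
noncomputable def corrFull {n d : ℕ} (lam : Fin (d ^ 2 - 1) → Matrix (Fin d) (Fin d) ℂ)
    (ρ : Matrix (Fin n → Fin d) (Fin n → Fin d) ℂ) (a : Fin n → Fin (d ^ 2 - 1)) : ℝ :=
  (Matrix.trace (ρ * Matrix.of (fun v w : Fin n → Fin d => ∏ j, lam (a j) (v j) (w j)))).re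

/-- The matricization `T_{fg|hl}` of the 4-body correlation tensor: rows indexed by
`(i_f, i_g)`, columns by `(i_h, i_l)`. -/
noncomputable def T2v2 {d : ℕ} (lam : Fin (d ^ 2 - 1) → Matrix (Fin d) (Fin d) ℂ)
    (ρ : Matrix (Fin 4 → Fin d) (Fin 4 → Fin d) ℂ) (f g h l : Fin 4) :
    Matrix (Fin (d ^ 2 - 1) × Fin (d ^ 2 - 1)) (Fin (d ^ 2 - 1) × Fin (d ^ 2 - 1)) ℝ :=
  Matrix.of fun r c => corrFull lam ρ
    (fun j => if j = f then r.1 else if j = g then r.2 else if j = h then c.1 else c.2)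


/-! The full correlation tensor of a state that is a product `ρ_A ⊗ ρ_B` across a bipartition
`A | Aᶜ` factorizes, `t_a = t^A_{a|A} · t^B_{a|Aᶜ}`, and so does `∑ₐ t_a²`. For a density matrix
`σ` on `m` parties, Bessel's inequality for the Hilbert–Schmidt-orthogonal family formed by `1` and
the tensor products of generators, together with `tr σ² ≤ 1`, gives `∑ₐ |tr (σ λ_a)|² ≤
2^m (1 - d^{-m})`. With `|A| + |Aᶜ| = 4`, AM–GM bounds the product of the two factors by
`16 (1 - d^{-2})²`. Every singular value of `T_{fg|hl}` is at most its Frobenius norm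
`√(∑ₐ t_a²)`, and the Ky Fan `k`-norm is a sum of `k` of them. -/

open scoped Kronecker InnerProductSpace

section KyFan

variable {α β : Type*} [Fintype α] [Fintype β] [DecidableEq β]

theorem singVals_le_sqrt_sum_sq (M : Matrix α β ℝ) (i : β) :
    singVals M i ≤ √(∑ a, ∑ b, M a b ^ 2) := by
  have hM := isHermitian_conjTranspose_mul_self M
  have htrace : ∑ j, hM.eigenvalues j = ∑ a, ∑ b, M a b ^ 2 := by
    have := hM.trace_eq_sum_eigenvalues
    simp only [RCLike.ofReal_real_eq_id, id] at this
    rw [← this, Finset.sum_comm]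
    simp [trace, mul_apply, sq]
  refine Real.sqrt_le_sqrt ?_
  rw [← htrace]
  exact Finset.single_le_sum (fun j _ => eigenvalues_conjTranspose_mul_self_nonneg M j)
    (Finset.mem_univ i)

theorem kyFan_le_mul {M : Matrix α β ℝ} {B : ℝ} (hB : 0 ≤ B) (hM : ∀ i, singVals M i ≤ B)
    (k : ℕ) : kyFan k M ≤ k * B := by
  refine Finset.sup'_le _ _ fun s hs => ?_
  calc ∑ i ∈ s, singVals M i ≤ s.card • B := Finset.sum_le_card_nsmul _ _ _ fun i _ => hM i
    _ ≤ k * B := by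
      rw [nsmul_eq_mul]
      gcongr
      exact_mod_cast (Finset.mem_filter.mp hs).2

end KyFan

theorem Fintype.sum_restrict_mul_restrict_compl {ι κ R : Type*} [Fintype ι] [DecidableEq ι]
    [Fintype κ] [CommSemiring R] (p : ι → Prop) [DecidablePred p]
    (F : ({j // p j} → κ) → R) (G : ({j // ¬ p j} → κ) → R) :
    ∑ a : ι → κ, F (fun j => a j) * G (fun j => a j) = (∑ b, F b) * ∑ c, G c := by
  rw [Finset.sum_mul_sum, ← Fintype.sum_prod_type']
  exact Fintype.sum_equiv (Equiv.piEquivPiSubtypeProd p fun _ => κ) _ _ fun _ => rfl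

theorem sum_norm_inner_sq_div_le {𝕜 E ι : Type*} [RCLike 𝕜] [NormedAddCommGroup E]
    [InnerProductSpace 𝕜 E] [Fintype ι] {v : ι → E} (hv : Pairwise fun i j => ⟪v i, v j⟫_𝕜 = 0)
    (hv0 : ∀ i, v i ≠ 0) (x : E) :
    ∑ i, ‖⟪v i, x⟫_𝕜‖ ^ 2 / ‖v i‖ ^ 2 ≤ ‖x‖ ^ 2 := by
  classical
  have hon : Orthonormal 𝕜 fun i => ((‖v i‖⁻¹ : ℝ) : 𝕜) • v i := by
    rw [orthonormal_iff_ite]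
    intro i j
    simp only [inner_smul_left, inner_smul_right, RCLike.conj_ofReal]
    split_ifs with hij
    · subst hij
      rw [inner_self_eq_norm_sq_to_K, ← RCLike.ofReal_pow, ← RCLike.ofReal_mul, ← RCLike.ofReal_mul]
      have := norm_ne_zero_iff.mpr (hv0 i)
      field_simp
      simp
    · simp [hv hij]
  convert hon.sum_inner_products_le x (s := Finset.univ) using 2 with i
  rw [inner_smul_left, RCLike.conj_ofReal, norm_mul, RCLike.norm_ofReal, mul_pow, abs_inv,
    abs_norm, div_eq_inv_mul, inv_pow]

namespace Matrix

section PiKron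

variable {ι n R : Type*} [Fintype ι]

def piKron [CommMonoid R] (A : ι → Matrix n n R) : Matrix (ι → n) (ι → n) R :=
  of fun v w => ∏ j, A j (v j) (w j)

section CommSemiring

variable [CommSemiring R] [DecidableEq ι] [Fintype n]

theorem piKron_mul_piKron (A B : ι → Matrix n n R) :
    piKron A * piKron B = piKron fun j => A j * B j := by
  ext v w
  simp only [piKron, mul_apply, of_apply, ← Finset.prod_mul_distrib]
  exact (Fintype.prod_sum fun j x => A j (v j) x * B j x (w j)).symm

theorem trace_piKron (A : ι → Matrix n n R) : (piKron A).trace = ∏ j, (A j).trace := by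
  simp only [trace, diag, piKron, of_apply]
  exact (Fintype.prod_sum fun j x => A j x x).symm

end CommSemiring

theorem conjTranspose_piKron [CommSemiring R] [StarRing R] (A : ι → Matrix n n R) :
    (piKron A)ᴴ = piKron fun j => (A j)ᴴ := by
  ext v w
  simp [piKron, star_prod]

theorem trace_submatrix_equiv {m : Type*} [Fintype n] [Fintype m] [AddCommMonoid R]
    (A : Matrix n n R) (e : m ≃ n) : (A.submatrix e e).trace = A.trace :=
  Fintype.sum_equiv e _ _ fun _ => rfl

theorem piKron_eq_submatrix_kronecker [CommMonoid R] (p : ι → Prop) [DecidablePred p]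
    (A : ι → Matrix n n R) :
    piKron A =
      (piKron (fun j : {j // p j} => A j) ⊗ₖ piKron (fun j : {j // ¬ p j} => A j)).submatrix
        (Equiv.piEquivPiSubtypeProd p fun _ => n) (Equiv.piEquivPiSubtypeProd p fun _ => n) := by
  ext v w
  simp only [piKron, submatrix_apply, kroneckerMap_apply, of_apply,
    Equiv.piEquivPiSubtypeProd_apply]
  exact (Fintype.prod_subtype_mul_prod_subtype p fun j => A j (v j) (w j)).symm

theorem trace_mul_piKron_of_eq_submatrix_kronecker [CommSemiring R] [DecidableEq ι] [Fintype n]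
    (p : ι → Prop) [DecidablePred p] {ρ : Matrix (ι → n) (ι → n) R}
    {ρA : Matrix ({j // p j} → n) ({j // p j} → n) R}
    {ρB : Matrix ({j // ¬ p j} → n) ({j // ¬ p j} → n) R}
    (hρ : ρ = (ρA ⊗ₖ ρB).submatrix (Equiv.piEquivPiSubtypeProd p fun _ => n)
      (Equiv.piEquivPiSubtypeProd p fun _ => n))
    (A : ι → Matrix n n R) :
    (ρ * piKron A).trace
      = (ρA * piKron fun j : {j // p j} => A j).trace
        * (ρB * piKron fun j : {j // ¬ p j} => A j).trace := by
  rw [hρ, piKron_eq_submatrix_kronecker p, submatrix_mul_equiv, trace_submatrix_equiv,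
    ← mul_kronecker_mul, trace_kronecker]

end PiKron

section HilbertSchmidt

variable {𝕜 m n : Type*} [RCLike 𝕜] [Fintype m] [Fintype n]

def frobeniusVec (M : Matrix m n 𝕜) : EuclideanSpace 𝕜 (m × n) :=
  WithLp.toLp 2 fun p => M p.1 p.2

theorem inner_frobeniusVec (X Y : Matrix m n 𝕜) :
    ⟪X.frobeniusVec, Y.frobeniusVec⟫_𝕜 = (Xᴴ * Y).trace := by
  simp only [frobeniusVec, PiLp.inner_apply, RCLike.inner_apply, trace, diag, mul_apply,
    conjTranspose_apply, Fintype.sum_prod_type]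
  rw [Finset.sum_comm]
  simp [mul_comm]

theorem norm_frobeniusVec_sq (X : Matrix m n 𝕜) :
    ‖X.frobeniusVec‖ ^ 2 = RCLike.re (Xᴴ * X).trace := by
  rw [← inner_frobeniusVec, inner_self_eq_norm_sq]

theorem IsHermitian.trace_mul_self [DecidableEq n] {A : Matrix n n 𝕜} (hA : A.IsHermitian) :
    (A * A).trace = ∑ i, (hA.eigenvalues i : 𝕜) ^ 2 := by
  conv_lhs => rw [hA.spectral_theorem, ← map_mul, Unitary.conjStarAlgAut_apply, trace_mul_cycle,
    Unitary.coe_star_mul_self, one_mul, diagonal_mul_diagonal, trace_diagonal]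
  simp [sq]

theorem PosSemidef.re_trace_mul_self_le [DecidableEq n] {A : Matrix n n 𝕜} (hA : A.PosSemidef) :
    RCLike.re (A * A).trace ≤ RCLike.re A.trace ^ 2 := by
  rw [hA.1.trace_mul_self, hA.1.trace_eq_sum_eigenvalues]
  simp only [map_sum, ← RCLike.ofReal_pow, RCLike.ofReal_re]
  exact Finset.sum_sq_le_sq_sum_of_nonneg fun i _ => hA.eigenvalues_nonneg i

theorem norm_trace_sq_div_card_add_sum_le [DecidableEq n] [Nonempty n] {κ : Type*} [Fintype κ]
    [DecidableEq κ]
    (P : κ → Matrix n n 𝕜) {N : ℝ} (hN : 0 < N) (hPtr : ∀ b, (P b).trace = 0)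
    (hP : ∀ b c, ((P b)ᴴ * P c).trace = if b = c then (N : 𝕜) else 0) (σ : Matrix n n 𝕜) :
    ‖σ.trace‖ ^ 2 / Fintype.card n + ∑ b, ‖((P b)ᴴ * σ).trace‖ ^ 2 / N
      ≤ RCLike.re (σᴴ * σ).trace := by
  classical
  let v : Option κ → EuclideanSpace 𝕜 (n × n) := fun o => (Option.elim o 1 P).frobeniusVec
  have hv1 : ‖v none‖ ^ 2 = Fintype.card n := by
    simp [v, norm_frobeniusVec_sq]
  have hvP : ∀ b, ‖v (some b)‖ ^ 2 = N := fun b => by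
    simp [v, norm_frobeniusVec_sq, hP]
  have horth : Pairwise fun o o' => ⟪v o, v o'⟫_𝕜 = 0 := by
    rintro (_ | b) (_ | c) hne
    · exact absurd rfl hne
    · simp [v, inner_frobeniusVec, hPtr]
    · simp [v, inner_frobeniusVec, trace_conjTranspose, hPtr]
    · have hbc : b ≠ c := fun h => hne (congrArg some h)
      simp [v, inner_frobeniusVec, hP, hbc]
  have hne : ∀ o, v o ≠ 0 := by
    rintro (_ | b) h
    · simp [h, eq_comm] at hv1
    · have := hvP b
      rw [h, norm_zero] at this
      linarith
  have := sum_norm_inner_sq_div_le horth hne σ.frobeniusVec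
  rw [Fintype.sum_option, hv1, norm_frobeniusVec_sq] at this
  simp only [hvP] at this
  simpa [v, inner_frobeniusVec] using this

theorem PosSemidef.sum_norm_trace_mul_sq_le [DecidableEq n] {κ : Type*} [Fintype κ]
    [DecidableEq κ] (P : κ → Matrix n n 𝕜) {N : ℝ} (hN : 0 < N) (hPtr : ∀ b, (P b).trace = 0)
    (hP : ∀ b c, ((P b)ᴴ * P c).trace = if b = c then (N : 𝕜) else 0) {σ : Matrix n n 𝕜}
    (hσ : σ.PosSemidef) (hσ1 : σ.trace = 1) :
    ∑ b, ‖((P b)ᴴ * σ).trace‖ ^ 2 ≤ N * (1 - (Fintype.card n : ℝ)⁻¹) := by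
  have : Nonempty n := by
    rw [← not_isEmpty_iff]
    intro
    simp [trace] at hσ1
  have hbessel := norm_trace_sq_div_card_add_sum_le P hN hPtr hP σ
  have hpurity := hσ.re_trace_mul_self_le
  rw [hσ.1.eq, hσ1, ← Finset.sum_div] at hbessel
  rw [hσ1] at hpurity
  simp only [norm_one, one_pow, RCLike.one_re, one_div] at hbessel hpurity
  rw [← div_le_iff₀' hN]
  linarith

end HilbertSchmidt

end Matrix

section GellMann

variable {ι n κ : Type*} [Fintype ι] [DecidableEq ι] [Fintype n] [DecidableEq κ]
  {lam : κ → Matrix n n ℂ}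

theorem trace_conjTranspose_piKron_mul_piKron (hherm : ∀ i, (lam i).IsHermitian)
    (horth : ∀ i j, (lam i * lam j).trace = if i = j then 2 else 0) (b c : ι → κ) :
    ((piKron fun j => lam (b j))ᴴ * piKron fun j => lam (c j)).trace
      = if b = c then (2 : ℂ) ^ Fintype.card ι else 0 := by
  simp only [conjTranspose_piKron, (hherm _).eq, piKron_mul_piKron, trace_piKron, horth]
  split_ifs with hbc
  · simp [hbc, Finset.prod_const, Finset.card_univ]
  · obtain ⟨j, hj⟩ := Function.ne_iff.mp hbc
    exact Finset.prod_eq_zero (Finset.mem_univ j) (if_neg hj)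

theorem sum_norm_trace_mul_piKron_sq_le [DecidableEq n] [Fintype κ] [Nonempty ι]
    (hherm : ∀ i, (lam i).IsHermitian) (htr : ∀ i, (lam i).trace = 0)
    (horth : ∀ i j, (lam i * lam j).trace = if i = j then 2 else 0)
    {σ : Matrix (ι → n) (ι → n) ℂ} (hσ : σ.PosSemidef) (hσ1 : σ.trace = 1) :
    ∑ b : ι → κ, ‖(σ * piKron fun j => lam (b j)).trace‖ ^ 2
      ≤ 2 ^ Fintype.card ι * (1 - ((Fintype.card n : ℝ) ^ Fintype.card ι)⁻¹) := by
  have hherm' : ∀ b : ι → κ, (piKron fun j => lam (b j))ᴴ = piKron fun j => lam (b j) := by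
    intro b
    simp only [conjTranspose_piKron, (hherm _).eq]
  have h := hσ.sum_norm_trace_mul_sq_le (fun b : ι → κ => piKron fun j => lam (b j))
    (N := 2 ^ Fintype.card ι) (by positivity) (fun b => by simp [trace_piKron, htr])
    (fun b c => by simp [trace_conjTranspose_piKron_mul_piKron hherm horth]) hσ1
  simpa [hherm', trace_mul_comm σ, Fintype.card_fun] using h

end GellMann

theorem one_sub_pow_mul_one_sub_pow_le {x : ℝ} (hx : 0 ≤ x) {m n p : ℕ} (h : m + n = 2 * p) :
    (1 - x ^ m) * (1 - x ^ n) ≤ (1 - x ^ p) ^ 2 := by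
  have hprod : x ^ m * x ^ n = (x ^ p) ^ 2 := by rw [← pow_add, h, pow_mul']
  have hm := pow_nonneg hx m
  have hn := pow_nonneg hx n
  have hp := pow_nonneg hx p
  nlinarith [sq_nonneg (x ^ m - x ^ n), sq_nonneg (x ^ m + x ^ n - 2 * x ^ p)]

theorem two_pow_mul_one_sub_inv_pow_le {x : ℝ} (hx : 0 < x) {m : ℕ} (hm : m ≤ 4) :
    2 ^ m * (1 - (x ^ m)⁻¹) * (2 ^ (4 - m) * (1 - (x ^ (4 - m))⁻¹))
      ≤ (4 * (x ^ 2 - 1) / x ^ 2) ^ 2 := by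
  have key := one_sub_pow_mul_one_sub_pow_le (inv_nonneg.2 hx.le) (m := m) (n := 4 - m) (p := 2)
    (by omega)
  calc 2 ^ m * (1 - (x ^ m)⁻¹) * (2 ^ (4 - m) * (1 - (x ^ (4 - m))⁻¹))
      = 2 ^ (m + (4 - m)) * ((1 - x⁻¹ ^ m) * (1 - x⁻¹ ^ (4 - m))) := by
        rw [pow_add, inv_pow, inv_pow]; ring
    _ ≤ 2 ^ 4 * (1 - x⁻¹ ^ 2) ^ 2 := by
        rw [Nat.add_sub_cancel' hm]; gcongr
    _ = (4 * (x ^ 2 - 1) / x ^ 2) ^ 2 := by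
        field_simp; ring

theorem sum_norm_trace_mul_piKron_sq_le_of_product {ι n κ : Type*} [Fintype ι] [DecidableEq ι]
    [Fintype n] [DecidableEq n] [Fintype κ] [DecidableEq κ] {lam : κ → Matrix n n ℂ}
    (hherm : ∀ i, (lam i).IsHermitian) (htr : ∀ i, (lam i).trace = 0)
    (horth : ∀ i j, (lam i * lam j).trace = if i = j then 2 else 0)
    (p : ι → Prop) [DecidablePred p] [Nonempty {j // p j}] [Nonempty {j // ¬ p j}]
    {ρA : Matrix ({j // p j} → n) ({j // p j} → n) ℂ}
    {ρB : Matrix ({j // ¬ p j} → n) ({j // ¬ p j} → n) ℂ}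
    (hA : ρA.PosSemidef) (hA1 : ρA.trace = 1) (hB : ρB.PosSemidef) (hB1 : ρB.trace = 1)
    {ρ : Matrix (ι → n) (ι → n) ℂ}
    (hρ : ρ = (ρA ⊗ₖ ρB).submatrix (Equiv.piEquivPiSubtypeProd p fun _ => n)
      (Equiv.piEquivPiSubtypeProd p fun _ => n)) :
    ∑ a : ι → κ, ‖(ρ * piKron fun j => lam (a j)).trace‖ ^ 2
      ≤ 2 ^ Fintype.card {j // p j} * (1 - ((Fintype.card n : ℝ) ^ Fintype.card {j // p j})⁻¹)
        * (2 ^ Fintype.card {j // ¬ p j}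
          * (1 - ((Fintype.card n : ℝ) ^ Fintype.card {j // ¬ p j})⁻¹)) := by
  simp only [trace_mul_piKron_of_eq_submatrix_kronecker p hρ, norm_mul, mul_pow]
  rw [Fintype.sum_restrict_mul_restrict_compl p
    (fun b => ‖(ρA * piKron fun j => lam (b j)).trace‖ ^ 2)
    (fun c => ‖(ρB * piKron fun j => lam (c j)).trace‖ ^ 2)]
  have hSA := sum_norm_trace_mul_piKron_sq_le hherm htr horth hA hA1
  exact mul_le_mul hSA (sum_norm_trace_mul_piKron_sq_le hherm htr horth hB hB1)
    (Finset.sum_nonneg fun _ _ => by positivity)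
    ((Finset.sum_nonneg fun _ _ => by positivity).trans hSA)

theorem SepUnder.sum_norm_trace_mul_piKron_sq_le {N d : ℕ} {κ : Type*} [Fintype κ] [DecidableEq κ]
    {lam : κ → Matrix (Fin d) (Fin d) ℂ} (hherm : ∀ i, (lam i).IsHermitian)
    (htr : ∀ i, (lam i).trace = 0) (horth : ∀ i j, (lam i * lam j).trace = if i = j then 2 else 0)
    {ρ : Matrix (Fin N → Fin d) (Fin N → Fin d) ℂ} {A : Finset (Fin N)} (hA : A.Nonempty)
    (hAu : A ≠ Finset.univ) (hsep : SepUnder ρ A) :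
    ∑ a : Fin N → κ, ‖(ρ * piKron fun j => lam (a j)).trace‖ ^ 2
      ≤ 2 ^ A.card * (1 - ((d : ℝ) ^ A.card)⁻¹)
        * (2 ^ (N - A.card) * (1 - ((d : ℝ) ^ (N - A.card))⁻¹)) := by
  obtain ⟨ρA, ρB, hA1, hA1tr, hB, hBtr, hρ⟩ := hsep
  have : Nonempty {j // j ∈ A} := hA.to_subtype
  have : Nonempty {j // j ∉ A} := by
    obtain ⟨j, hj⟩ : ∃ j, j ∉ A := by
      by_contra! hall
      exact hAu (Finset.eq_univ_iff_forall.mpr hall)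
    exact ⟨⟨j, hj⟩⟩
  have hprod : ρ = (ρA ⊗ₖ ρB).submatrix (Equiv.piEquivPiSubtypeProd (· ∈ A) fun _ => Fin d)
      (Equiv.piEquivPiSubtypeProd (· ∈ A) fun _ => Fin d) := by
    ext v w
    exact hρ v w
  -- The `Fintype {j // j ∈ A}` instance inside `SepUnder` is not syntactically the lemma's
  -- `Subtype.fintype (· ∈ A)`; unifying them by unfolding times out, `convert` does not.
  have h := sum_norm_trace_mul_piKron_sq_le_of_product (κ := κ) hherm htr horth (· ∈ A)
    (ρA := ρA) (ρB := ρB) (by convert hA1) (by convert hA1tr) (by convert hB) (by convert hBtr)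
    hprod
  simpa only [Fintype.card_coe, Fintype.card_subtype_compl, Fintype.card_fin] using h

theorem sum_sq_T2v2 {d : ℕ} (lam : Fin (d ^ 2 - 1) → Matrix (Fin d) (Fin d) ℂ)
    (ρ : Matrix (Fin 4 → Fin d) (Fin 4 → Fin d) ℂ) {f g h l : Fin 4}
    (hperm : ({f, g, h, l} : Finset (Fin 4)) = Finset.univ) :
    ∑ r, ∑ c, T2v2 lam ρ f g h l r c ^ 2 = ∑ a, corrFull lam ρ a ^ 2 := by
  obtain ⟨hgf, hhf, hhg, hlf, hlg, hlh⟩ : g ≠ f ∧ h ≠ f ∧ h ≠ g ∧ l ≠ f ∧ l ≠ g ∧ l ≠ h := by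
    revert f g h l
    decide
  let e : (Fin (d ^ 2 - 1) × Fin (d ^ 2 - 1)) × (Fin (d ^ 2 - 1) × Fin (d ^ 2 - 1))
      → Fin 4 → Fin (d ^ 2 - 1) := fun rc j =>
    if j = f then rc.1.1 else if j = g then rc.1.2 else if j = h then rc.2.1 else rc.2.2
  have he : Function.Injective e :=
    Function.LeftInverse.injective (g := fun a => ((a f, a g), (a h, a l))) fun rc => by
      simp [e, hgf, hhf, hhg, hlf, hlg, hlh]
  rw [← Fintype.sum_prod_type']
  refine Fintype.sum_bijective e ((Fintype.bijective_iff_injective_and_card e).mpr ⟨he, ?_⟩)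
    _ _ fun _ => rfl
  simp only [Fintype.card_prod, Fintype.card_fun, Fintype.card_fin]
  ring

theorem kyFan_T2v2_of_entangled_general (d : ℕ) (hd : 2 ≤ d)
    (lam : Fin (d ^ 2 - 1) → Matrix (Fin d) (Fin d) ℂ)
    (hherm : ∀ i, (lam i).IsHermitian)
    (htr : ∀ i, (lam i).trace = 0)
    (horth : ∀ i j, (lam i * lam j).trace = if i = j then 2 else 0)
    (f g h l : Fin 4) (hperm : ({f, g, h, l} : Finset (Fin 4)) = Finset.univ)
    (ρ : Matrix (Fin 4 → Fin d) (Fin 4 → Fin d) ℂ)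
    (hsome : ∃ A : Finset (Fin 4), A.Nonempty ∧ A ≠ Finset.univ ∧ SepUnder ρ A)
    (k : ℕ) :
    kyFan k (T2v2 lam ρ f g h l) ≤ 4 * (k : ℝ) * ((d : ℝ) ^ 2 - 1) / (d : ℝ) ^ 2 := by
  obtain ⟨A, hA, hAu, hsep⟩ := hsome
  set B : ℝ := 4 * ((d : ℝ) ^ 2 - 1) / (d : ℝ) ^ 2
  have hd' : (2 : ℝ) ≤ d := by exact_mod_cast hd
  have hB : 0 ≤ B := div_nonneg (by nlinarith) (by positivity)
  have hcorr : ∑ a, corrFull lam ρ a ^ 2 ≤ B ^ 2 :=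
    calc ∑ a, corrFull lam ρ a ^ 2
        ≤ ∑ a : Fin 4 → Fin (d ^ 2 - 1), ‖(ρ * piKron fun j => lam (a j)).trace‖ ^ 2 :=
          Finset.sum_le_sum fun a _ =>
            sq_le_sq.mpr ((Complex.abs_re_le_norm _).trans_eq (abs_norm _).symm)
      _ ≤ _ := hsep.sum_norm_trace_mul_piKron_sq_le hherm htr horth hA hAu
      _ ≤ B ^ 2 := two_pow_mul_one_sub_inv_pow_le (by positivity) (Finset.card_le_univ A)
  have hsing : ∀ i, singVals (T2v2 lam ρ f g h l) i ≤ B := fun i =>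
    calc singVals (T2v2 lam ρ f g h l) i ≤ √(∑ r, ∑ c, T2v2 lam ρ f g h l r c ^ 2) :=
          singVals_le_sqrt_sum_sq _ i
      _ ≤ B := by
          rw [sum_sq_T2v2 lam ρ hperm]
          exact Real.sqrt_le_iff.mpr ⟨hB, hcorr⟩
  calc kyFan k (T2v2 lam ρ f g h l) ≤ k * B := kyFan_le_mul hB hsing k
    _ = 4 * (k : ℝ) * ((d : ℝ) ^ 2 - 1) / (d : ℝ) ^ 2 := by ring

/-- (Lemma 4(ii)) If a pure four-partite state is separable under at least one bipartition
but entangled under the bipartition `fg|hl`, then `‖T_{fg|hl}‖_k ≤ 4k(d²-1)/d²`. -/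
theorem kyFan_T2v2_of_entangled (d : ℕ) (hd : 2 ≤ d)
    (lam : Fin (d ^ 2 - 1) → Matrix (Fin d) (Fin d) ℂ)
    (hherm : ∀ i, (lam i).IsHermitian)
    (htr : ∀ i, (lam i).trace = 0)
    (horth : ∀ i j, (lam i * lam j).trace = if i = j then 2 else 0)
    (f g h l : Fin 4) (hperm : ({f, g, h, l} : Finset (Fin 4)) = Finset.univ)
    (ρ : Matrix (Fin 4 → Fin d) (Fin 4 → Fin d) ℂ)
    (hpsd : ρ.PosSemidef) (htrρ : ρ.trace = 1) (hpure : ρ * ρ = ρ)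
    (hsome : ∃ A : Finset (Fin 4), A.Nonempty ∧ A ≠ Finset.univ ∧ SepUnder ρ A)
    (hent : ¬ SepUnder ρ {f, g})
    (k : ℕ) (hk1 : 1 ≤ k) (hk2 : k ≤ d ^ 2 - 1) :
    kyFan k (T2v2 lam ρ f g h l) ≤ 4 * (k : ℝ) * ((d : ℝ) ^ 2 - 1) / (d : ℝ) ^ 2 :=
  kyFan_T2v2_of_entangled_general d hd lam hherm htr horth f g h l hperm ρ hsome k
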